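/- arXiv:2507.11142 — 2 statements merged into one kernel-verified Lean document; each statement's English description precedes it below -/
import Mathlib

section
/- Let E be a nonzero finite-dimensional complex inner product space, T : E → E a self-adjoint linear map, and μ an eigenvalue of T with μ ≠ 0. Let r ≥ 0 be a real number such that |ν| ≤ r for every eigenvalue ν of T with ν ≠ μ, and let P denote the orthogonal projection of E onto the eigenspace ker(T − μ·id). Then for every ψ ∈ E and every natural number n, ‖μ^{−n} • T^n ψ − P ψ‖ ≤ (r/|μ|)^n · ‖ψ‖. -/
/-!
Split `ψ = Pψ + w` with `w ∈ Kᗮ`, where `K` is the `μ`-eigenspace. Then `Tⁿ Pψ = μⁿ Pψ`, so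
`μ⁻ⁿ Tⁿ ψ - Pψ = μ⁻ⁿ Tⁿ w`. The complement `Kᗮ` is `T`-invariant, and on it `T` has norm at most
`r`: in an orthonormal eigenbasis of `T`, the coordinates of `w` vanish along eigenvalue `μ` and
are scaled by eigenvalues of modulus `≤ r` elsewhere. Finally `‖w‖ ≤ ‖ψ‖`.
-/

open Module Module.End

open scoped InnerProductSpace

theorem OrthonormalBasis.norm_le_mul_norm_of_forall_norm_inner_le
    {ι 𝕜 E : Type*} [Fintype ι] [RCLike 𝕜] [NormedAddCommGroup E] [InnerProductSpace 𝕜 E]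
    (b : OrthonormalBasis ι 𝕜 E) {x y : E} {r : ℝ} (hr : 0 ≤ r)
    (h : ∀ i, ‖⟪b i, y⟫_𝕜‖ ≤ r * ‖⟪b i, x⟫_𝕜‖) : ‖y‖ ≤ r * ‖x‖ := by
  refine (pow_le_pow_iff_left₀ (norm_nonneg y) (by positivity) two_ne_zero).mp ?_
  rw [mul_pow, ← b.sum_sq_norm_inner_right, ← b.sum_sq_norm_inner_right, Finset.mul_sum]
  gcongr with i
  rw [← mul_pow]
  exact pow_le_pow_left₀ (norm_nonneg _) (h i) 2

theorem Module.End.pow_apply_of_mem_eigenspace {R M : Type*} [CommRing R] [AddCommGroup M]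
    [Module R M] {f : End R M} {μ : R} {v : M} (hv : v ∈ f.eigenspace μ) (n : ℕ) :
    (f ^ n) v = μ ^ n • v := by
  induction n with
  | zero => simp
  | succ n ih => rw [pow_succ', mul_apply, ih, map_smul, mem_eigenspace_iff.mp hv, smul_smul,
      pow_succ]

namespace LinearMap.IsSymmetric

variable {𝕜 E : Type*} [RCLike 𝕜] [NormedAddCommGroup E] [InnerProductSpace 𝕜 E]
  [FiniteDimensional 𝕜 E] {T : E →ₗ[𝕜] E} {μ : 𝕜} {r : ℝ}

theorem norm_apply_le_of_mem_orthogonal_eigenspace (hT : T.IsSymmetric) (hr : 0 ≤ r)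
    (hbound : ∀ ν, HasEigenvalue T ν → ν ≠ μ → ‖ν‖ ≤ r) {x : E}
    (hx : x ∈ (eigenspace T μ)ᗮ) : ‖T x‖ ≤ r * ‖x‖ := by
  let b := hT.eigenvectorBasis rfl
  refine b.norm_le_mul_norm_of_forall_norm_inner_le hr fun i ↦ ?_
  set ev : 𝕜 := (hT.eigenvalues rfl i : 𝕜)
  have hinner : ⟪b i, T x⟫_𝕜 = ev * ⟪b i, x⟫_𝕜 := by
    rw [← hT, hT.apply_eigenvectorBasis, inner_smul_left, RCLike.conj_ofReal]
  rw [hinner, norm_mul]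
  by_cases hev : ev = μ
  · have hbi : b i ∈ eigenspace T μ := hev ▸ (hT.hasEigenvector_eigenvectorBasis rfl i).1
    rw [Submodule.inner_right_of_mem_orthogonal hbi hx, norm_zero, mul_zero, mul_zero]
  · gcongr
    exact hbound ev (hT.hasEigenvalue_eigenvalues rfl i) hev

theorem norm_pow_apply_le_of_mem_orthogonal_eigenspace (hT : T.IsSymmetric) (hr : 0 ≤ r)
    (hbound : ∀ ν, HasEigenvalue T ν → ν ≠ μ → ‖ν‖ ≤ r) (n : ℕ) {x : E}
    (hx : x ∈ (eigenspace T μ)ᗮ) : ‖(T ^ n) x‖ ≤ r ^ n * ‖x‖ := by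
  induction n generalizing x with
  | zero => simp
  | succ n ih =>
    calc ‖(T ^ (n + 1)) x‖ = ‖(T ^ n) (T x)‖ := by rw [pow_succ, mul_apply]
      _ ≤ r ^ n * ‖T x‖ := ih (hT.invariant_orthogonalComplement_eigenspace μ x hx)
      _ ≤ r ^ n * (r * ‖x‖) := by
        gcongr
        exact hT.norm_apply_le_of_mem_orthogonal_eigenspace hr hbound hx
      _ = r ^ (n + 1) * ‖x‖ := by ring

end LinearMap.IsSymmetric

theorem power_iteration_rate_general
    {E : Type*} [NormedAddCommGroup E] [InnerProductSpace ℂ E]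
    [FiniteDimensional ℂ E]
    (T : Module.End ℂ E) (hT : LinearMap.IsSymmetric T)
    (μ : ℂ) (hμ0 : μ ≠ 0)
    (r : ℝ) (hr : 0 ≤ r)
    (hbound : ∀ ν : ℂ, Module.End.HasEigenvalue T ν → ν ≠ μ → ‖ν‖ ≤ r)
    (ψ : E) (n : ℕ) :
    ‖(μ ^ n)⁻¹ • ((T ^ n) ψ) -
        ((Submodule.orthogonalProjectionOnto (Module.End.eigenspace T μ) ψ : E))‖ ≤
      (r / ‖μ‖) ^ n * ‖ψ‖ := by
  set K := eigenspace T μ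
  have hw : ψ - K.starProjection ψ ∈ Kᗮ := K.sub_starProjection_mem_orthogonal ψ
  have hwψ : ‖ψ - K.starProjection ψ‖ ≤ ‖ψ‖ :=
    K.starProjection_orthogonal_val ψ ▸ Kᗮ.norm_starProjection_apply_le ψ
  set w := ψ - K.starProjection ψ
  have hPψ : (T ^ n) (K.starProjection ψ) = μ ^ n • K.starProjection ψ :=
    pow_apply_of_mem_eigenspace (K.orthogonalProjectionOnto ψ).2 n
  have hsplit : (μ ^ n)⁻¹ • (T ^ n) ψ - K.starProjection ψ = (μ ^ n)⁻¹ • (T ^ n) w := by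
    rw [map_sub, hPψ, smul_sub, inv_smul_smul₀ (pow_ne_zero n hμ0)]
  rw [← K.starProjection_apply, hsplit, norm_smul, norm_inv, norm_pow, div_pow,
    div_mul_eq_mul_div, inv_mul_eq_div]
  gcongr
  calc ‖(T ^ n) w‖ ≤ r ^ n * ‖w‖ :=
        hT.norm_pow_apply_le_of_mem_orthogonal_eigenspace hr hbound n hw
    _ ≤ r ^ n * ‖ψ‖ := by gcongr

/-- Quantitative convergence of power iteration: if every eigenvalue of `T` other than `μ`
has modulus at most `r`, then `‖μ⁻ⁿ Tⁿ ψ − P ψ‖ ≤ (r/|μ|)ⁿ ‖ψ‖`. -/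
theorem power_iteration_rate
    {E : Type*} [NormedAddCommGroup E] [InnerProductSpace ℂ E]
    [FiniteDimensional ℂ E] [Nontrivial E]
    (T : Module.End ℂ E) (hT : LinearMap.IsSymmetric T)
    (μ : ℂ) (hμ : Module.End.HasEigenvalue T μ) (hμ0 : μ ≠ 0)
    (r : ℝ) (hr : 0 ≤ r)
    (hbound : ∀ ν : ℂ, Module.End.HasEigenvalue T ν → ν ≠ μ → ‖ν‖ ≤ r)
    (ψ : E) (n : ℕ) :
    ‖(μ ^ n)⁻¹ • ((T ^ n) ψ) -
        ((Submodule.orthogonalProjectionOnto (Module.End.eigenspace T μ) ψ : E))‖ ≤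
      (r / ‖μ‖) ^ n * ‖ψ‖ :=
  power_iteration_rate_general T hT μ hμ0 r hr hbound ψ n
end

section
/- Let E be a nonzero finite-dimensional complex inner product space, T : E → E a self-adjoint linear map, ε a real number, and C > 0 a real number. Let μ be an eigenvalue of T with 1 − C(μ − ε)² > 0, and let ρ ≥ 0 be a real number such that |1 − C(ν − ε)²| ≤ ρ for every eigenvalue ν of T with ν ≠ μ. Let P denote the orthogonal projection of E onto the eigenspace ker(T − μ·id). Then for every ψ ∈ E and every natural number n, ‖(1 − C(μ − ε)²)^{−n} • (id − C·(T − ε·id)²)^n ψ − P ψ‖ ≤ (ρ/(1 − C(μ − ε)²))^n · ‖ψ‖. -/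
/-!
In an orthonormal eigenbasis of `T`, the operator
`(1 − C(μ − ε)²)⁻ⁿ (id − C(T − ε)²)ⁿ − P` is diagonal: its entry is `0` on eigenvectors for `μ`
and `((1 − C(ν − ε)²) / (1 − C(μ − ε)²))ⁿ` on eigenvectors for an eigenvalue `ν ≠ μ`.
A diagonal operator in an orthonormal basis has norm at most the largest modulus of its entries.
-/

open Module Polynomial

theorem OrthonormalBasis.norm_apply_le_of_apply_eq_smul {𝕜 E ι : Type*} [RCLike 𝕜]
    [NormedAddCommGroup E] [InnerProductSpace 𝕜 E] [Fintype ι] (b : OrthonormalBasis ι 𝕜 E)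
    {S : E →ₗ[𝕜] E} {d : ι → 𝕜} (hS : ∀ i, S (b i) = d i • b i) {K : ℝ} (hK : 0 ≤ K)
    (hd : ∀ i, ‖d i‖ ≤ K) (x : E) : ‖S x‖ ≤ K * ‖x‖ := by
  have hSx : S x = b.repr.symm (WithLp.toLp 2 fun i ↦ d i * b.repr x i) := by
    conv_lhs => rw [← b.sum_repr x]
    rw [← b.sum_repr_symm, map_sum]
    exact Finset.sum_congr rfl fun i _ ↦ by rw [map_smul, hS, smul_smul, mul_comm]
  rw [hSx, LinearIsometryEquiv.norm_map, ← b.repr.norm_map x, EuclideanSpace.norm_eq,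
    EuclideanSpace.norm_eq, ← Real.sqrt_sq hK, ← Real.sqrt_mul (sq_nonneg K), Finset.mul_sum]
  gcongr with i
  rw [norm_mul, mul_pow]
  gcongr
  exact hd i

theorem Module.End.folded_pow_apply_of_mem_eigenspace {R M : Type*} [CommRing R]
    [AddCommGroup M] [Module R M] {T : End R M} {ν : R} {v : M} (hv : v ∈ End.eigenspace T ν)
    (c e : R) (n : ℕ) :
    ((1 - c • (T - e • 1) ^ 2 : End R M) ^ n) v = (1 - c * (ν - e) ^ 2) ^ n • v := by
  have hpoly :
      (1 - c • (T - e • 1) ^ 2 : End R M) ^ n = aeval T ((1 - C c * (X - C e) ^ 2) ^ n) := by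
    simp only [map_pow, map_sub, map_one, map_mul, aeval_C, aeval_X]
    rw [Algebra.smul_def, Algebra.algebraMap_eq_smul_one e]
  rw [hpoly, aeval_apply_of_mem_apply_eq_smul (mem_eigenspace_iff.mp hv)]
  simp

theorem LinearMap.IsSymmetric.starProjection_eigenspace_apply_of_mem {𝕜 E : Type*} [RCLike 𝕜]
    [NormedAddCommGroup E] [InnerProductSpace 𝕜 E] [FiniteDimensional 𝕜 E]
    {T : E →ₗ[𝕜] E} (hT : T.IsSymmetric) (μ : 𝕜) {ν : 𝕜} {v : E} (hv : v ∈ End.eigenspace T ν) :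
    (End.eigenspace T μ).starProjection v = if ν = μ then v else 0 := by
  split_ifs with hνμ
  · subst hνμ
    exact Submodule.starProjection_eq_self_iff.mpr hv
  · refine (End.eigenspace T μ).starProjection_apply_eq_zero_iff.mpr fun u hu ↦ ?_
    exact hT.orthogonalFamily_eigenspaces (Ne.symm hνμ) ⟨u, hu⟩ ⟨v, hv⟩

theorem folded_spectrum_rate_general
    {E : Type*} [NormedAddCommGroup E] [InnerProductSpace ℂ E]
    [FiniteDimensional ℂ E]
    (T : Module.End ℂ E) (hT : LinearMap.IsSymmetric T)
    (ε C : ℝ)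
    (μ : ℝ)
    (hpos : 0 < 1 - C * (μ - ε) ^ 2)
    (ρ : ℝ) (hρ : 0 ≤ ρ)
    (hbound : ∀ ν : ℝ, Module.End.HasEigenvalue T (ν : ℂ) → ν ≠ μ →
      |1 - C * (ν - ε) ^ 2| ≤ ρ)
    (ψ : E) (n : ℕ) :
    ‖((1 - C * (μ - ε) ^ 2) ^ n)⁻¹ •
          ((((1 - (C : ℂ) • (T - (ε : ℂ) • 1) ^ 2 : Module.End ℂ E)) ^ n) ψ) -
        ((Submodule.orthogonalProjectionOnto (Module.End.eigenspace T (μ : ℂ)) ψ : E))‖ ≤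
      (ρ / (1 - C * (μ - ε) ^ 2)) ^ n * ‖ψ‖ := by
  set δ := 1 - C * (μ - ε) ^ 2
  set b := hT.eigenvectorBasis rfl
  set r : ℝ → ℝ := fun ν ↦ 1 - C * (ν - ε) ^ 2
  have hb (i) : b i ∈ Module.End.eigenspace T (hT.eigenvalues rfl i : ℂ) :=
    (hT.hasEigenvector_eigenvectorBasis rfl i).1
  let S : Module.End ℂ E := (((δ ^ n)⁻¹ : ℝ) : ℂ) • (1 - (C : ℂ) • (T - (ε : ℂ) • 1) ^ 2) ^ n -
    (Module.End.eigenspace T μ).starProjection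
  have hS (i) : S (b i) = (((r (hT.eigenvalues rfl i) / δ) ^ n -
      if hT.eigenvalues rfl i = μ then 1 else 0 : ℝ) : ℂ) • b i := by
    simp only [S, LinearMap.sub_apply, LinearMap.smul_apply, ContinuousLinearMap.coe_coe,
      Module.End.folded_pow_apply_of_mem_eigenspace (hb i),
      hT.starProjection_eigenspace_apply_of_mem _ (hb i), Complex.ofReal_inj, smul_smul,
      Complex.ofReal_sub, sub_smul]
    congr 1
    · push_cast [r, div_pow]
      ring_nf
    · split_ifs <;> simp
  have hd (i) : ‖(((r (hT.eigenvalues rfl i) / δ) ^ n -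
      if hT.eigenvalues rfl i = μ then 1 else 0 : ℝ) : ℂ)‖ ≤ (ρ / δ) ^ n := by
    rw [Complex.norm_real, Real.norm_eq_abs]
    split_ifs with hi
    · rw [hi, div_self hpos.ne', one_pow, sub_self, abs_zero]
      positivity
    · rw [sub_zero, abs_pow, abs_div, abs_of_pos hpos]
      gcongr
      exact hbound _ (hT.hasEigenvalue_eigenvalues rfl i) hi
  have hSψ : ‖S ψ‖ ≤ (ρ / δ) ^ n * ‖ψ‖ :=
    b.norm_apply_le_of_apply_eq_smul hS (by positivity) hd ψ
  simpa only [S, LinearMap.sub_apply, LinearMap.smul_apply, Complex.coe_smul,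
    ContinuousLinearMap.coe_coe, Submodule.coe_orthogonalProjectionOnto_apply] using hSψ

/-- Quantitative convergence of the folded spectrum method: if `1 − C(μ − ε)² > 0` and
`|1 − C(ν − ε)²| ≤ ρ` for every other eigenvalue `ν`, then
`‖(1 − C(μ − ε)²)⁻ⁿ (id − C(T − ε·id)²)ⁿ ψ − P ψ‖ ≤ (ρ/(1 − C(μ − ε)²))ⁿ ‖ψ‖`. -/
theorem folded_spectrum_rate
    {E : Type*} [NormedAddCommGroup E] [InnerProductSpace ℂ E]
    [FiniteDimensional ℂ E] [Nontrivial E]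
    (T : Module.End ℂ E) (hT : LinearMap.IsSymmetric T)
    (ε C : ℝ) (hC : 0 < C)
    (μ : ℝ) (hμ : Module.End.HasEigenvalue T (μ : ℂ))
    (hpos : 0 < 1 - C * (μ - ε) ^ 2)
    (ρ : ℝ) (hρ : 0 ≤ ρ)
    (hbound : ∀ ν : ℝ, Module.End.HasEigenvalue T (ν : ℂ) → ν ≠ μ →
      |1 - C * (ν - ε) ^ 2| ≤ ρ)
    (ψ : E) (n : ℕ) :
    ‖((1 - C * (μ - ε) ^ 2) ^ n)⁻¹ •
          ((((1 - (C : ℂ) • (T - (ε : ℂ) • 1) ^ 2 : Module.End ℂ E)) ^ n) ψ) -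
        ((Submodule.orthogonalProjectionOnto (Module.End.eigenspace T (μ : ℂ)) ψ : E))‖ ≤
      (ρ / (1 - C * (μ - ε) ^ 2)) ^ n * ‖ψ‖ :=
  folded_spectrum_rate_general T hT ε C μ hpos ρ hρ hbound ψ n
end
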